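/- Let (A, ‖·‖) be a normed space containing an infinite equilateral set (a_n)_{n≥1} (i.e., ‖a_n - a_m‖ = 1 for all n ≠ m), and suppose A is complete. Define f : E → A by f(x) = Σ_{k≥1} a_{x_k} / (k · 2^k), where E = (ℕ*)^{ℕ*} with the ultrametric δ(x,x') = 2^{-χ(x,x')}. Then f is well defined and injective. -/
import Mathlib


/-- In a Banach space containing an infinite equilateral set `(a n)`, the map
`f(x) = ∑_{k ≥ 1} a_{x_k} / (k 2^k)` on the Baire space of positive-integer sequences
is well defined (the series is summable) and injective.
(The index `k : ℕ` below corresponds to the paper's index `k + 1 ≥ 1`.) -/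
theorem stmt5 {A : Type*} [NormedAddCommGroup A] [NormedSpace ℝ A] [CompleteSpace A]
    (a : ℕ+ → A) (ha : ∀ n m : ℕ+, n ≠ m → ‖a n - a m‖ = 1) :
    (∀ x : ℕ → ℕ+,
      Summable fun k : ℕ => (((k : ℝ) + 1) * 2 ^ (k + 1))⁻¹ • a (x k)) ∧
    Function.Injective
      (fun x : ℕ → ℕ+ => ∑' k : ℕ, (((k : ℝ) + 1) * 2 ^ (k + 1))⁻¹ • a (x k)) := by
  classical
  set c : ℕ → ℝ := fun k => (((k : ℝ) + 1) * 2 ^ (k + 1))⁻¹ with hc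
  have hcpos : ∀ k, 0 < c k := by
    intro k
    apply inv_pos.mpr
    positivity
  have hcle : ∀ k : ℕ, c k ≤ (1/2 : ℝ) ^ (k + 1) := by
    intro k
    have h1 : (1 : ℝ) ≤ (k : ℝ) + 1 := by
      have := Nat.cast_nonneg (α := ℝ) k; linarith
    have h2 : (0 : ℝ) < 2 ^ (k + 1) := by positivity
    rw [hc]
    simp only
    rw [one_div, inv_pow]
    apply inv_anti₀ h2
    nlinarith
  have hbd : ∀ n : ℕ+, ‖a n‖ ≤ ‖a 1‖ + 1 := by
    intro n
    by_cases h : n = 1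
    · subst h; linarith [norm_nonneg (a 1)]
    · have h1 := ha n 1 h
      calc ‖a n‖ = ‖a 1 + (a n - a 1)‖ := by congr 1; abel
        _ ≤ ‖a 1‖ + ‖a n - a 1‖ := norm_add_le _ _
        _ = ‖a 1‖ + 1 := by rw [h1]
  have hsum : ∀ x : ℕ → ℕ+, Summable fun k : ℕ => c k • a (x k) := by
    intro x
    apply Summable.of_norm_bounded (g := fun k => (‖a 1‖ + 1) * (1/2 : ℝ) ^ k)
    · exact (summable_geometric_of_lt_one (by norm_num) (by norm_num)).mul_left _
    · intro k
      rw [norm_smul, Real.norm_eq_abs, abs_of_pos (hcpos k)]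
      have h1 : c k ≤ (1/2 : ℝ) ^ k := by
        refine (hcle k).trans ?_
        apply pow_le_pow_of_le_one (by norm_num) (by norm_num)
        omega
      have h2 : (0 : ℝ) ≤ (1/2 : ℝ) ^ k := by positivity
      have h3 := hbd (x k)
      calc c k * ‖a (x k)‖ ≤ (1/2 : ℝ) ^ k * (‖a 1‖ + 1) :=
            mul_le_mul h1 h3 (norm_nonneg _) h2
        _ = (‖a 1‖ + 1) * (1/2 : ℝ) ^ k := mul_comm _ _
  refine ⟨hsum, ?_⟩
  intro x y hxy
  simp only at hxy
  by_contra hne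
  have hex : ∃ k, x k ≠ y k := by
    by_contra h
    push_neg at h
    exact hne (funext h)
  set k₀ := Nat.find hex with hk₀def
  have hk0 : x k₀ ≠ y k₀ := Nat.find_spec hex
  have hlt : ∀ k < k₀, x k = y k := fun k hk => not_not.mp (Nat.find_min hex hk)
  set g : ℕ → A := fun k => c k • (a (x k) - a (y k)) with hg
  have hgs : Summable g :=
    by simpa [hg, smul_sub] using (hsum x).sub (hsum y)
  have hg0 : ∑' k, g k = 0 := by
    have : ∀ k, g k = c k • a (x k) - c k • a (y k) := by
      intro k; simp [hg, smul_sub]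
    calc ∑' k, g k = ∑' k, (c k • a (x k) - c k • a (y k)) := by
            exact tsum_congr this
      _ = (∑' k, c k • a (x k)) - ∑' k, c k • a (y k) := Summable.tsum_sub (hsum x) (hsum y)
      _ = 0 := by rw [hxy, sub_self]
  have key := Summable.tsum_eq_add_tsum_ite hgs k₀
  rw [hg0] at key
  have hT : g k₀ = -(∑' n, if n = k₀ then 0 else g n) :=
    eq_neg_of_add_eq_zero_left key.symm
  -- the norm of the head term
  have hgk0norm : ‖g k₀‖ = ((k₀ : ℝ) + 1)⁻¹ * (1/2 : ℝ) ^ (k₀ + 1) := by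
    rw [hg]
    simp only
    rw [norm_smul, Real.norm_eq_abs, abs_of_pos (hcpos k₀), ha _ _ hk0, mul_one, hc]
    simp only
    rw [mul_inv, one_div, inv_pow]
  -- bound for tail terms
  set H : ℕ → ℝ := fun k => if k ≤ k₀ then 0 else ((k₀ : ℝ) + 2)⁻¹ * (1/2 : ℝ) ^ (k + 1)
    with hH
  have hHnonneg : ∀ k, 0 ≤ H k := by
    intro k
    rw [hH]
    simp only
    split
    · exact le_refl 0
    · positivity
  have hHle : ∀ k, H k ≤ ((k₀ : ℝ) + 2)⁻¹ * (1/2 : ℝ) ^ (k + 1) := by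
    intro k
    rw [hH]
    simp only
    split
    · positivity
    · exact le_refl _
  have hHsum : Summable H := by
    apply Summable.of_nonneg_of_le hHnonneg hHle
    have : Summable fun k : ℕ => (1/2 : ℝ) ^ (k + 1) := by
      simpa [pow_succ, mul_comm] using
        (summable_geometric_of_lt_one (r := (1/2 : ℝ)) (by norm_num) (by norm_num)).mul_left
          (1/2 : ℝ)
    exact this.mul_left _
  have hpt : ∀ k, ‖if k = k₀ then (0 : A) else g k‖ ≤ H k := by
    intro k
    rcases lt_trichotomy k k₀ with h | h | h
    · have hxk : x k = y k := hlt k h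
      have : g k = 0 := by simp [hg, hxk]
      simp [this, hHnonneg k, h.ne]
    · subst h; simp [hHnonneg k₀]
    · have hne' : ¬ k ≤ k₀ := not_le.mpr h
      rw [if_neg (by omega), hH]
      simp only [if_neg hne']
      rw [hg]
      simp only
      rw [norm_smul, Real.norm_eq_abs, abs_of_pos (hcpos k)]
      have hle1 : ‖a (x k) - a (y k)‖ ≤ 1 := by
        by_cases hxy' : x k = y k
        · simp [hxy']
        · rw [ha _ _ hxy']
      have hck : c k ≤ ((k₀ : ℝ) + 2)⁻¹ * (1/2 : ℝ) ^ (k + 1) := by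
        rw [hc]
        simp only
        rw [one_div, inv_pow, ← mul_inv]
        apply inv_anti₀ (by positivity)
        apply mul_le_mul_of_nonneg_right _ (by positivity)
        have : (k₀ : ℝ) + 2 ≤ (k : ℝ) + 1 := by
          have : k₀ + 1 ≤ k := h
          push_cast
          have : ((k₀ : ℝ) + 1) ≤ (k : ℝ) := by exact_mod_cast this
          linarith
        exact this
      calc c k * ‖a (x k) - a (y k)‖ ≤ c k * 1 :=
            mul_le_mul_of_nonneg_left hle1 (hcpos k).le
        _ = c k := mul_one _
        _ ≤ _ := hck
  have hsumnorm : Summable fun k => ‖if k = k₀ then (0 : A) else g k‖ :=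
    Summable.of_nonneg_of_le (fun k => norm_nonneg _) hpt hHsum
  have hHval : ∑' k, H k = ((k₀ : ℝ) + 2)⁻¹ * (1/2 : ℝ) ^ (k₀ + 1) := by
    have hsplit := Summable.sum_add_tsum_nat_add (k₀ + 1) hHsum
    have hzero : ∑ i ∈ Finset.range (k₀ + 1), H i = 0 := by
      apply Finset.sum_eq_zero
      intro i hi
      rw [Finset.mem_range] at hi
      rw [hH]
      simp only
      rw [if_pos (by omega)]
    have hshift : ∀ i : ℕ, H (i + (k₀ + 1)) =
        (((k₀ : ℝ) + 2)⁻¹ * (1/2 : ℝ) ^ (k₀ + 2)) * (1/2 : ℝ) ^ i := by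
      intro i
      rw [hH]
      simp only
      rw [if_neg (by omega)]
      rw [show i + (k₀ + 1) + 1 = (k₀ + 2) + i by omega, pow_add]
      ring
    rw [hzero, zero_add] at hsplit
    rw [← hsplit]
    rw [tsum_congr hshift, tsum_mul_left,
      tsum_geometric_of_lt_one (by norm_num) (by norm_num)]
    rw [show (k₀ + 2) = (k₀ + 1) + 1 by omega, pow_succ]
    norm_num
    ring
  have hnorm : ‖g k₀‖ ≤ ((k₀ : ℝ) + 2)⁻¹ * (1/2 : ℝ) ^ (k₀ + 1) := by
    rw [hT, norm_neg]
    calc ‖∑' n, if n = k₀ then (0 : A) else g n‖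
        ≤ ∑' n, ‖if n = k₀ then (0 : A) else g n‖ := norm_tsum_le_tsum_norm hsumnorm
      _ ≤ ∑' n, H n := Summable.tsum_le_tsum hpt hsumnorm hHsum
      _ = _ := hHval
  rw [hgk0norm] at hnorm
  have hpow : (0 : ℝ) < (1/2 : ℝ) ^ (k₀ + 1) := by positivity
  have h1 : ((k₀ : ℝ) + 1)⁻¹ ≤ ((k₀ : ℝ) + 2)⁻¹ := by
    have := mul_le_mul_of_nonneg_right hnorm (le_of_lt (inv_pos.mpr hpow))
    rw [mul_assoc, mul_inv_cancel₀ hpow.ne', mul_one, mul_assoc,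
      mul_inv_cancel₀ hpow.ne', mul_one] at this
    exact this
  have h2 : ((k₀ : ℝ) + 2)⁻¹ < ((k₀ : ℝ) + 1)⁻¹ := by
    apply inv_strictAnti₀ (by positivity)
    linarith
  linarith
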